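/- arXiv:2210.15029 — 4 statements merged into one kernel-verified Lean document; each statement's English description precedes it below -/
import Mathlib

section
/- The k-stance satisfies the polyhedron inequality: for any k+1 sequences w_0,...,w_k in A^l with k > 2, d_k(w_0,...,w_{k-1}) ≤ Σ_{i=0}^{k-1} d_k(w_0,...,ŵ_i,...,w_k), where ŵ_i denotes omission of the i-th sequence from the tuple (w_0,...,w_k). -/
/-!
At a position `j` where `w 0, …, w (k-1)` carry pairwise distinct letters, some `k`-tuple
obtained by deleting one `w i` with `i < k` still does: if the letter of `w k` at `j` repeats
that of some `w i`, delete `w i`, otherwise all `k + 1` letters are distinct and any deletion works.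
So the positions counted on the left are covered by those counted in the summands.
-/

def stance {A : Type*} [DecidableEq A] {k l : ℕ} (w : Fin k → Fin l → A) : ℕ :=
  (Finset.univ.filter fun j : Fin l => Function.Injective fun i : Fin k => w i j).card

open Function Set

-- Swapping `p` and `q` leaves `f` unchanged and exchanges `{p}ᶜ` with `{q}ᶜ`.
lemma Set.InjOn.compl_singleton_of_apply_eq {α β : Type*} {f : α → β} {p q : α}
    (hpq : f p = f q) (h : InjOn f {q}ᶜ) : InjOn f {p}ᶜ := by
  classical
  have hf : ∀ x, f (Equiv.swap p q x) = f x := fun x => by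
    rcases eq_or_ne x p with rfl | hxp
    · simp [hpq]
    rcases eq_or_ne x q with rfl | hxq
    · simp [hpq]
    · rw [Equiv.swap_apply_of_ne_of_ne hxp hxq]
  intro x hx y hy hxy
  have hswap : ∀ z ∈ ({p}ᶜ : Set α), Equiv.swap p q z ∈ ({q}ᶜ : Set α) := fun z hz => by
    simpa [Equiv.swap_apply_eq_iff] using hz
  exact (Equiv.swap p q).injective <|
    h (hswap x hx) (hswap y hy) (by rw [hf, hf, hxy])

lemma Fin.injective_comp_succAbove_iff {α : Type*} {n : ℕ} (f : Fin (n + 1) → α)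
    (p : Fin (n + 1)) : Injective (f ∘ p.succAbove) ↔ InjOn f {p}ᶜ := by
  rw [← injOn_univ, (Fin.succAbove_right_injective.injOn).comp_iff, image_univ,
    Fin.range_succAbove]

lemma Fin.exists_injective_comp_succAbove_castSucc {α : Type*} {n : ℕ} (hn : 0 < n)
    (f : Fin (n + 1) → α) (hf : Injective fun i : Fin n => f i.castSucc) :
    ∃ i : Fin n, Injective fun m : Fin n => f ((i.castSucc : Fin (n + 1)).succAbove m) := by
  simp_rw [← Function.comp_def f, Fin.injective_comp_succAbove_iff]
  by_cases hrep : ∃ i : Fin n, f i.castSucc = f (Fin.last n)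
  · obtain ⟨i, hi⟩ := hrep
    have hlast : InjOn f {Fin.last n}ᶜ := by
      rw [← Fin.injective_comp_succAbove_iff, Fin.succAbove_last]
      exact hf
    exact ⟨i, hlast.compl_singleton_of_apply_eq hi⟩
  · push Not at hrep
    refine ⟨⟨0, hn⟩, Injective.injOn ?_⟩
    rw [← Fin.snoc_init_self f, Fin.snoc_injective_iff]
    exact ⟨hf, fun ⟨i, hi⟩ => hrep i hi⟩

/-- Polyhedron inequality: for `k + 1` sequences `w 0, …, w k` (with `k > 2`),
the `k`-stance of the first `k` sequences is at most the sum over `i < k` of the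
`k`-stances of the tuples obtained by omitting the `i`-th sequence. -/
theorem stance_polyhedron {A : Type*} [DecidableEq A] {k l : ℕ} (hk : 2 < k)
    (w : Fin (k + 1) → Fin l → A) :
    stance (fun i : Fin k => w i.castSucc) ≤
      ∑ i : Fin k, stance (fun m : Fin k => w ((i.castSucc : Fin (k + 1)).succAbove m)) := by
  refine (Finset.card_le_card fun j hj => ?_).trans Finset.card_biUnion_le
  simp only [Finset.mem_filter, Finset.mem_univ, true_and, Finset.mem_biUnion] at hj ⊢
  exact Fin.exists_injective_comp_succAbove_castSucc (by omega) (fun x => w x j) hj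
end

section
/- The converse of the linear-recombinant criterion fails: there exist three sequences of length 4 over the DNA alphabet {A,C,G,T} whose 3-stance is zero, yet none of the three is a linear recombinant of the other two. (Witness: TTCA, CTCG, TTTG.) -/
/-- The converse of the linear-recombinant criterion fails: there are three length-4
sequences over the DNA alphabet (encoded as `Fin 4`, `A=0, C=1, G=2, T=3`) whose
`3`-stance is zero, yet none is a linear recombinant of the other two.
Witness: `TTCA, CTCG, TTTG`. -/
theorem exists_stance_zero_not_recombinant :
    ∃ w : Fin 3 → Fin 4 → Fin 4,
      w = ![![3, 3, 1, 0], ![1, 3, 1, 2], ![3, 3, 3, 2]] ∧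
      stance w = 0 ∧
      ∀ i : Fin 3, ¬ (∀ j : Fin 4, ∃ i' : Fin 3, i' ≠ i ∧ w i j = w i' j) := by
  exact ⟨_, rfl, by decide, by decide⟩
end

section
/- There exist two triples of length-4 sequences over {A,C,G,T}, W_0 = (TTCA, CTCG, TTTG) and W_1 = (CTCG, TTAG, ATTG), such that all pairwise Hamming distances within W_0 and within W_1 are equal to 2, but d_3(W_0) = 0 while d_3(W_1) = 2. -/
/-- Hamming distance of two sequences of length `l`. -/
def hamming {A : Type*} [DecidableEq A] {l : ℕ} (u v : Fin l → A) : ℕ :=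
  (Finset.univ.filter fun j : Fin l => u j ≠ v j).card

/-- Two triples of length-4 DNA sequences (`A=0, C=1, G=2, T=3`):
`W₀ = (TTCA, CTCG, TTTG)` and `W₁ = (CTCG, TTAG, ATTG)` have all pairwise Hamming
distances equal to `2`, but `d₃(W₀) = 0` while `d₃(W₁) = 2`. -/
theorem exists_same_hamming_different_stance :
    ∃ W₀ W₁ : Fin 3 → Fin 4 → Fin 4,
      W₀ = ![![3, 3, 1, 0], ![1, 3, 1, 2], ![3, 3, 3, 2]] ∧
      W₁ = ![![1, 3, 1, 2], ![3, 3, 0, 2], ![0, 3, 3, 2]] ∧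
      (∀ i i' : Fin 3, i ≠ i' → hamming (W₀ i) (W₀ i') = 2) ∧
      (∀ i i' : Fin 3, i ≠ i' → hamming (W₁ i) (W₁ i') = 2) ∧
      stance W₀ = 0 ∧ stance W₁ = 2 := by
  refine ⟨_, _, rfl, rfl, ?_, ?_, ?_, ?_⟩ <;>
    first
    | (intro i i' h; fin_cases i <;> fin_cases i' <;> simp_all <;> decide)
    | (simp [stance, Function.Injective]; decide)
end

section
/- The weighted boundary operator squares to zero: with ∂_n^v(σ) = Σ_{i=0}^n (v(σ̂_i)/v(σ)) (-1)^i σ̂_i on the free R-module generated by n-simplices of a weighted simplicial complex (X, v) where v(σ) divides v(τ) whenever τ ⊆ σ, one has ∂_{n-1}^v ∘ ∂_n^v = 0. -/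
/-! By linearity it suffices to treat a single simplex `σ`. Then `∂∂σ` is a sum over
ordered pairs `(x, y)` of distinct vertices of `σ`, and the terms for `(x, y)` and `(y, x)`
cancel: the sign exponents differ by one because exactly one of the two vertices changes position,
and both weight factors are `v((σ \ x) \ y) / v(σ)`, as one sees after multiplying by the
non-zero-divisor `v(σ)`. -/

/-- The weighted boundary operator: on a basis simplex `σ` (a finite set of vertices of
the linearly ordered vertex type `V`, with the simplicial ordering induced by the order),
`∂(σ) = ∑_{x ∈ σ} (-1)^{pos of x in σ} (v(σ \ x)/v(σ)) (σ \ x)`, where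
`q τ σ` plays the role of the quotient `v(τ)/v(σ)`. -/
noncomputable def wbd {V : Type*} [LinearOrder V] {R : Type*} [CommRing R]
    (q : Finset V → Finset V → R) (c : Finset V →₀ R) : Finset V →₀ R :=
  c.sum fun σ a => ∑ x ∈ σ,
    Finsupp.single (σ.erase x) ((-1 : R) ^ ((σ.filter fun y => y < x).card) * q (σ.erase x) σ * a)

open Finset

section SignSwap

variable {V : Type*} [LinearOrder V]

lemma card_filter_lt_erase_of_lt (σ : Finset V) {x y : V} (h : y < x) :
    #((σ.erase x).filter (· < y)) = #(σ.filter (· < y)) := by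
  rw [filter_erase, erase_eq_of_notMem]
  simp only [mem_filter, not_and, not_lt]
  exact fun _ => h.le

lemma card_filter_lt_erase_add_one {σ : Finset V} {x y : V} (hy : y ∈ σ) (h : y < x) :
    #((σ.erase y).filter (· < x)) + 1 = #(σ.filter (· < x)) := by
  rw [filter_erase]
  exact card_erase_add_one (mem_filter.2 ⟨hy, h⟩)

lemma neg_one_pow_card_filter_lt_swap {M : Type*} [Monoid M] [HasDistribNeg M]
    {σ : Finset V} {x y : V} (hy : y ∈ σ) (h : y < x) :
    (-1 : M) ^ #((σ.erase x).filter (· < y)) * (-1) ^ #(σ.filter (· < x)) =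
      -((-1) ^ #((σ.erase y).filter (· < x)) * (-1) ^ #(σ.filter (· < y))) := by
  rw [card_filter_lt_erase_of_lt σ h, ← card_filter_lt_erase_add_one hy h, pow_succ,
    mul_neg_one, mul_neg, (Commute.pow_pow_self (-1 : M) _ _).eq]

end SignSwap

lemma quot_mul_quot_mul_weight {V R : Type*} [Semigroup R] {K : Set (Finset V)}
    {v : Finset V → R} {q : Finset V → Finset V → R} (hK : ∀ σ ∈ K, ∀ τ ⊆ σ, τ ∈ K)
    (hq : ∀ σ ∈ K, ∀ τ ⊆ σ, q τ σ * v σ = v τ)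
    {σ τ ρ : Finset V} (hσ : σ ∈ K) (hτ : τ ⊆ σ) (hρ : ρ ⊆ τ) :
    q ρ τ * q τ σ * v σ = v ρ := by
  rw [mul_assoc, hq σ hσ τ hτ, hq τ (hK σ hσ τ hτ) ρ hρ]

section WeightedBoundary

variable {V : Type*} [LinearOrder V] {R : Type*} [CommRing R]

lemma wbd_single (q : Finset V → Finset V → R) (σ : Finset V) (a : R) :
    wbd q (Finsupp.single σ a) = ∑ x ∈ σ,
      Finsupp.single (σ.erase x) ((-1 : R) ^ #(σ.filter (· < x)) * q (σ.erase x) σ * a) :=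
  Finsupp.sum_single_index (by simp)

lemma wbd_add (q : Finset V → Finset V → R) (f g : Finset V →₀ R) :
    wbd q (f + g) = wbd q f + wbd q g :=
  Finsupp.sum_add_index' (fun _ => by simp) fun σ a b => by
    simp only [mul_add, Finsupp.single_add, sum_add_distrib]

noncomputable def wbdAddHom (q : Finset V → Finset V → R) :
    (Finset V →₀ R) →+ (Finset V →₀ R) :=
  AddMonoidHom.mk' (wbd q) (wbd_add q)

lemma wbd_sum {ι : Type*} (q : Finset V → Finset V → R) (s : Finset ι)
    (f : ι → Finset V →₀ R) : wbd q (∑ i ∈ s, f i) = ∑ i ∈ s, wbd q (f i) :=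
  map_sum (wbdAddHom q) f s

def wbdWbdCoeff (q : Finset V → Finset V → R) (σ : Finset V) (x y : V) : R :=
  (-1) ^ #((σ.erase x).filter (· < y)) * q ((σ.erase x).erase y) (σ.erase x) *
    ((-1) ^ #(σ.filter (· < x)) * q (σ.erase x) σ)

lemma wbd_wbd_single (q : Finset V → Finset V → R) (σ : Finset V) (a : R) :
    wbd q (wbd q (Finsupp.single σ a)) = ∑ p ∈ σ.sigma (fun x => σ.erase x),
      Finsupp.single ((σ.erase p.1).erase p.2) (wbdWbdCoeff q σ p.1 p.2 * a) := by
  simp only [wbd_single, wbd_sum, sum_sigma', wbdWbdCoeff, mul_assoc]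

variable {K : Set (Finset V)} {v : Finset V → R} {q : Finset V → Finset V → R}

lemma wbdWbdCoeff_add_swap (hK : ∀ σ ∈ K, ∀ τ ⊆ σ, τ ∈ K)
    (hv : ∀ σ ∈ K, v σ ∈ nonZeroDivisors R) (hq : ∀ σ ∈ K, ∀ τ ⊆ σ, q τ σ * v σ = v τ)
    {σ : Finset V} (hσ : σ ∈ K) {x y : V} (hy : y ∈ σ) (h : y < x) :
    wbdWbdCoeff q σ x y + wbdWbdCoeff q σ y x = 0 := by
  have hquot : q ((σ.erase x).erase y) (σ.erase x) * q (σ.erase x) σ =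
      q ((σ.erase x).erase y) (σ.erase y) * q (σ.erase y) σ := by
    rw [← mul_cancel_right_mem_nonZeroDivisors (hv σ hσ),
      quot_mul_quot_mul_weight hK hq hσ (erase_subset x σ) (erase_subset y _),
      quot_mul_quot_mul_weight hK hq hσ (erase_subset y σ)
        (erase_right_comm (a := x) ▸ erase_subset x _)]
  have hsign := neg_one_pow_card_filter_lt_swap (M := R) hy h
  simp only [wbdWbdCoeff, ← erase_right_comm (s := σ) (a := x) (b := y)]
  linear_combination (-1 : R) ^ #((σ.erase x).filter (· < y)) *
      (-1) ^ #(σ.filter (· < x)) * hquot +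
    q ((σ.erase x).erase y) (σ.erase y) * q (σ.erase y) σ * hsign

lemma wbd_wbd_single_eq_zero (hK : ∀ σ ∈ K, ∀ τ ⊆ σ, τ ∈ K)
    (hv : ∀ σ ∈ K, v σ ∈ nonZeroDivisors R) (hq : ∀ σ ∈ K, ∀ τ ⊆ σ, q τ σ * v σ = v τ)
    {σ : Finset V} (hσ : σ ∈ K) (a : R) :
    wbd q (wbd q (Finsupp.single σ a)) = 0 := by
  rw [wbd_wbd_single]
  refine sum_involution (fun p _ => ⟨p.2, p.1⟩) (fun p hp => ?_) (fun p hp _ => ?_)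
    (fun p hp => ?_) (fun _ _ => rfl)
  all_goals
    obtain ⟨hx, hy⟩ := mem_sigma.1 hp
    obtain ⟨hne, hy⟩ := mem_erase.1 hy
  · dsimp only
    rw [erase_right_comm (a := p.2), ← Finsupp.single_add, ← add_mul]
    rcases hne.lt_or_gt with h | h
    · rw [wbdWbdCoeff_add_swap hK hv hq hσ hy h, zero_mul, Finsupp.single_zero]
    · rw [add_comm, wbdWbdCoeff_add_swap hK hv hq hσ hx h, zero_mul, Finsupp.single_zero]
  · exact fun h => hne (congrArg Sigma.fst h)
  · exact mem_sigma.2 ⟨hy, mem_erase.2 ⟨hne.symm, hx⟩⟩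

end WeightedBoundary

/-- The weighted boundary operator squares to zero on chains supported on a weighted
simplicial complex `K`: the weights `v` are non-zero-divisors, the quotients `q τ σ`
satisfy `q τ σ * v σ = v τ` for faces `τ ⊆ σ`, and `c` is a chain supported on
`n`-simplices of `K`. -/
theorem wbd_wbd_eq_zero {V : Type*} [LinearOrder V] {R : Type*} [CommRing R]
    (K : Set (Finset V)) (hK : ∀ σ ∈ K, ∀ τ ⊆ σ, τ ∈ K)
    (v : Finset V → R) (q : Finset V → Finset V → R)
    (hv : ∀ σ ∈ K, v σ ∈ nonZeroDivisors R)
    (hq : ∀ σ ∈ K, ∀ τ ⊆ σ, q τ σ * v σ = v τ)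
    (n : ℕ) (c : Finset V →₀ R) (hc : ∀ σ ∈ c.support, σ ∈ K ∧ σ.card = n + 1) :
    wbd q (wbd q c) = 0 := by
  rw [← Finsupp.sum_single c, Finsupp.sum, wbd_sum, wbd_sum]
  exact sum_eq_zero fun σ hσ => wbd_wbd_single_eq_zero hK hv hq (hc σ hσ).1 (c σ)
end
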